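/- If an ordered field R satisfies the Extreme Value Property—every continuous function f : [a,b] → R attains a maximum on [a,b]—then R is Dedekind complete. -/

import Mathlib

/-!
If a nonempty set `S` bounded above by `b` had no least upper bound, then its set of upper bounds
would be clopen, so the map sending every upper bound to a fixed `a ∈ S` and fixing all other
points would be continuous. None of its values is an upper bound of `S`, so every value is exceeded
by some `s ∈ S`; such an `s` lies in `[a, b]`, is fixed by the map, and is not an upper bound either
(`S` has no greatest element). Hence the map has no maximum on `[a, b]`.
-/

open Set

theorem continuous_piecewise_of_isClopen {X Y : Type*} [TopologicalSpace X] [TopologicalSpace Y]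
    {s : Set X} [∀ x, Decidable (x ∈ s)] {f g : X → Y} (hs : IsClopen s) (hf : Continuous f)
    (hg : Continuous g) : Continuous (s.piecewise f g) :=
  hf.piecewise (by simp [hs.frontier_eq]) hg

section UpperBounds

variable {α : Type*} [LinearOrder α] {S : Set α}

theorem notMem_upperBounds_of_mem (hS : ∀ c, ¬IsLUB S c) {s : α} (hs : s ∈ S) :
    s ∉ upperBounds S :=
  fun hsU => hS s (IsGreatest.isLUB ⟨hs, hsU⟩)

variable [TopologicalSpace α] [OrderClosedTopology α]

theorem isClosed_upperBounds (S : Set α) : IsClosed (upperBounds S) := by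
  have hS : upperBounds S = ⋂ s ∈ S, Ici s := by
    ext x
    simp [mem_upperBounds]
  rw [hS]
  exact isClosed_biInter fun s _ => isClosed_Ici

theorem isOpen_upperBounds_of_forall_not_isLUB (hS : ∀ c, ¬IsLUB S c) :
    IsOpen (upperBounds S) := by
  refine isOpen_iff_mem_nhds.2 fun u hu => ?_
  obtain ⟨v, hv, hvu⟩ : ∃ v ∈ upperBounds S, v < u := by
    simpa [IsLUB, IsLeast, hu, mem_lowerBounds] using hS u
  exact Filter.mem_of_superset (Ioi_mem_nhds hvu) fun x hx => upperBounds_mono_mem hx.out.le hv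

theorem isClopen_upperBounds_of_forall_not_isLUB (hS : ∀ c, ¬IsLUB S c) :
    IsClopen (upperBounds S) :=
  ⟨isClosed_upperBounds S, isOpen_upperBounds_of_forall_not_isLUB hS⟩

end UpperBounds

theorem evp_implies_dedekind_complete_general
    {R : Type*} [LinearOrder R] [TopologicalSpace R] [OrderTopology R]
    (hevp : ∀ (a b : R) (f : R → R), a ≤ b → ContinuousOn f (Set.Icc a b) →
      ∃ c ∈ Set.Icc a b, ∀ x ∈ Set.Icc a b, f x ≤ f c) :
    ∀ S : Set R, S.Nonempty → BddAbove S → ∃ c : R, IsLUB S c := by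
  rintro S ⟨a, haS⟩ ⟨b, hb⟩
  by_contra! hS
  classical
  set f : R → R := (upperBounds S).piecewise (fun _ => a) id with hf_def
  have hf : Continuous f := continuous_piecewise_of_isClopen
    (isClopen_upperBounds_of_forall_not_isLUB hS) continuous_const continuous_id
  obtain ⟨c, hc, hmax⟩ := hevp a b f (hb haS) hf.continuousOn
  have hfc : a ≤ f c ∧ f c ∉ upperBounds S := by
    by_cases hcU : c ∈ upperBounds S
    · simpa [hf_def, hcU] using notMem_upperBounds_of_mem hS haS
    · simpa [hf_def, hcU] using hc.1
  obtain ⟨s, hs, hcs⟩ : ∃ s ∈ S, f c < s := by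
    simpa [mem_upperBounds] using hfc.2
  have hsc : f s ≤ f c := hmax s ⟨hfc.1.trans hcs.le, hb hs⟩
  simp only [hf_def, piecewise_eq_of_notMem _ _ _ (notMem_upperBounds_of_mem hS hs), id] at hsc
  exact hsc.not_gt hcs

theorem evp_implies_dedekind_complete
    {R : Type*} [Field R] [LinearOrder R] [IsStrictOrderedRing R] [TopologicalSpace R] [OrderTopology R]
    (hevp : ∀ (a b : R) (f : R → R), a ≤ b → ContinuousOn f (Set.Icc a b) →
      ∃ c ∈ Set.Icc a b, ∀ x ∈ Set.Icc a b, f x ≤ f c) :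
    ∀ S : Set R, S.Nonempty → BddAbove S → ∃ c : R, IsLUB S c :=
  evp_implies_dedekind_complete_general hevp
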